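/- Let G be an undirected connected graph with unique shortest paths and S ⊆ V a set of sites with tie-broken nearest-site assignment. If v ∈ Vor(s) for a site s ∈ S, then every vertex on the unique shortest path from s to v also lies in Vor(s); i.e., Voronoi cells are connected via shortest paths to the site. -/
import Mathlib

/-- The weight of a walk in an edge-weighted graph. -/
def walkWeight {V : Type} {G : SimpleGraph V} (w : V → V → ℝ) {a b : V}
    (p : G.Walk a b) : ℝ :=
  (p.darts.map fun d => w d.toProd.1 d.toProd.2).sum

lemma walkWeight_append {V : Type} {G : SimpleGraph V} (w : V → V → ℝ) {a b c : V}
    (p : G.Walk a b) (q : G.Walk b c) :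
    walkWeight w (p.append q) = walkWeight w p + walkWeight w q := by
  simp [walkWeight, SimpleGraph.Walk.darts_append]

lemma walkWeight_nonneg {V : Type} {G : SimpleGraph V} {w : V → V → ℝ}
    (hw : ∀ a b, 0 ≤ w a b) {a b : V} (p : G.Walk a b) : 0 ≤ walkWeight w p :=
  List.sum_nonneg (by rintro x hx; simp only [List.mem_map] at hx
                      obtain ⟨d, -, rfl⟩ := hx; exact hw _ _)

lemma walkWeight_bypass_le {V : Type} [DecidableEq V] {G : SimpleGraph V} {w : V → V → ℝ}
    (hw : ∀ a b, 0 ≤ w a b) {a b : V} (p : G.Walk a b) :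
    walkWeight w p.bypass ≤ walkWeight w p := by
  have hnodup : p.bypass.darts.Nodup :=
    List.Nodup.of_map SimpleGraph.Dart.edge
      (p.bypass_isPath.isTrail.edges_nodup)
  have hsub : List.Subperm p.bypass.darts p.darts :=
    hnodup.subperm (SimpleGraph.Walk.darts_bypass_subset p)
  obtain ⟨l, hperm, hsl⟩ := hsub
  calc walkWeight w p.bypass
      = (l.map fun d => w d.toProd.1 d.toProd.2).sum := by
        exact (List.Perm.sum_eq ((hperm.map _))).symm
    _ ≤ walkWeight w p := by
        refine List.Sublist.sum_le_sum (hsl.map _) ?_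
        rintro x hx; simp only [List.mem_map] at hx
        obtain ⟨d, -, rfl⟩ := hx; exact hw _ _

lemma dist_triangle_of_least {V : Type} {G : SimpleGraph V} {w : V → V → ℝ}
    (hw : ∀ a b, 0 ≤ w a b) {d : V → V → ℝ}
    (hd : ∀ a b : V,
      IsLeast {r : ℝ | ∃ q : G.Walk a b, q.IsPath ∧ walkWeight w q = r} (d a b))
    (a b c : V) : d a c ≤ d a b + d b c := by
  classical
  obtain ⟨q1, hq1, hq1w⟩ := (hd a b).1
  obtain ⟨q2, hq2, hq2w⟩ := (hd b c).1
  have h1 : d a c ≤ walkWeight w (q1.append q2).bypass :=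
    (hd a c).2 ⟨(q1.append q2).bypass, (q1.append q2).bypass_isPath, rfl⟩
  have h2 := walkWeight_bypass_le hw (q1.append q2)
  rw [walkWeight_append, hq1w, hq2w] at h2
  linarith

/-- Voronoi cells are connected via shortest paths to the site: if v lies in
the Voronoi cell of site s (tie-broken nearest-site assignment) and p is the
unique shortest path from s to v, then every vertex on p also lies in the
Voronoi cell of s. -/
theorem voronoi_cell_path_connected {V : Type} [Fintype V] [LinearOrder V]
    (G : SimpleGraph V) (w : V → V → ℝ)
    (hw : ∀ a b, 0 ≤ w a b) (hsymm : ∀ a b, w a b = w b a)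
    (d : V → V → ℝ)
    (hd : ∀ a b : V,
      IsLeast {r : ℝ | ∃ q : G.Walk a b, q.IsPath ∧ walkWeight w q = r} (d a b))
    (husp : ∀ (s t : V) (p q : G.Walk s t),
      p.IsPath → walkWeight w p = d s t →
      q.IsPath → walkWeight w q = d s t → p = q)
    (S : Finset V) (s : V) (hs : s ∈ S) (v : V)
    (p : G.Walk s v) (hp : p.IsPath) (hpw : walkWeight w p = d s v)
    (hv : ∀ s' ∈ S, s' ≠ s → d s v < d s' v ∨ (d s v = d s' v ∧ s < s')) :
    ∀ x ∈ p.support, ∀ s' ∈ S, s' ≠ s →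
      d s x < d s' x ∨ (d s x = d s' x ∧ s < s') := by
  classical
  intro x hx s' hs' hne
  -- split the path at x
  set p1 := p.takeUntil x hx with hp1def
  set p2 := p.dropUntil x hx with hp2def
  have hspec : p1.append p2 = p := p.take_spec hx
  have hp1 : p1.IsPath := hp.takeUntil hx
  have hp2 : p2.IsPath := hp.dropUntil hx
  have hsum : walkWeight w p1 + walkWeight w p2 = d s v := by
    rw [← walkWeight_append, hspec, hpw]
  have h1 : d s x ≤ walkWeight w p1 := (hd s x).2 ⟨p1, hp1, rfl⟩
  have h2 : d x v ≤ walkWeight w p2 := (hd x v).2 ⟨p2, hp2, rfl⟩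
  have htri : d s v ≤ d s x + d x v := dist_triangle_of_least hw hd s x v
  -- hence equality pieces
  have hpx : walkWeight w p1 = d s x ∧ walkWeight w p2 = d x v := by
    constructor <;> linarith
  have hkey : d s x + d x v = d s v := by linarith [hpx.1, hpx.2]
  have htri' : d s' v ≤ d s' x + d x v := dist_triangle_of_least hw hd s' x v
  have hv' := hv s' hs' hne
  rcases lt_trichotomy (d s x) (d s' x) with h | h | h
  · exact Or.inl h
  · refine Or.inr ⟨h, ?_⟩
    rcases lt_trichotomy s s' with h' | h' | h'
    · exact h'
    · exact absurd h' hne.symm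
    · exfalso
      have : d s' v ≤ d s v := by linarith
      rcases hv' with hlt | ⟨heq, hlt'⟩
      · linarith
      · exact absurd h' (not_lt.2 hlt'.le)
  · exfalso
    have : d s' v < d s v := by linarith
    rcases hv' with hlt | ⟨heq, -⟩ <;> linarith
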